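/- arXiv:2502.16522 — 2 statements merged into one kernel-verified Lean document; each statement's English description precedes it below -/
import Mathlib

section
/- Let G : ℝ → ℝ be measurable with |G(t₁) - G(t₂)| ≤ C(1 + |t₁ - t₂|). Then the greatest global growth-rate of G over ℝ equals the maximum of the greatest global growth-rates over ℝ⁻ and ℝ⁺: ⌈G⌉_ℝ = max{ ⌈G⌉_{ℝ⁻}, ⌈G⌉_{ℝ⁺} }. -/
open Filter Set

private lemma fekete_aux (f : ℝ → ℝ) (T : ℝ) (hT : 0 < T)
    (hsub : ∀ a b : ℝ, 0 < a → 0 < b → f (a + b) ≤ f a + f b) :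
    ∀ n : ℕ, ∀ r : ℝ, 0 < r → f (n * T + r) ≤ n * f T + f r := by
  intro n
  induction n with
  | zero => intro r hr; simp
  | succ n ih =>
    intro r hr
    have h1 : ((n:ℝ) + 1) * T + r = T + ((n:ℝ) * T + r) := by ring
    have h2 : (0:ℝ) < (n:ℝ) * T + r := by positivity
    calc f (((n:ℕ)+1 : ℕ) * T + r) = f (T + ((n:ℝ) * T + r)) := by push_cast; rw [h1]
    _ ≤ f T + f ((n:ℝ) * T + r) := hsub _ _ hT h2
    _ ≤ f T + ((n:ℝ) * f T + f r) := by linarith [ih r hr]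
    _ = (((n:ℕ)+1 : ℕ):ℝ) * f T + f r := by push_cast; ring

private lemma fekete (f : ℝ → ℝ) (C : ℝ) (hC : 0 < C)
    (hsub : ∀ a b : ℝ, 0 < a → 0 < b → f (a + b) ≤ f a + f b)
    (hub : ∀ t : ℝ, 0 < t → f t ≤ C * (1 + t))
    (hlb : ∀ t : ℝ, 1 ≤ t → -(C * (1 + t)) ≤ f t) :
    Tendsto (fun t => f t / t) atTop
      (nhds (sInf ((fun t => f t / t) '' Ici (1:ℝ)))) := by
  set S : Set ℝ := (fun t => f t / t) '' Ici (1:ℝ) with hS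
  have hne : S.Nonempty := ⟨f 1 / 1, 1, mem_Ici.2 le_rfl, rfl⟩
  have hbdd : BddBelow S := by
    refine ⟨-(2*C), ?_⟩
    rintro x ⟨t, ht, rfl⟩
    rw [mem_Ici] at ht
    have ht0 : (0:ℝ) < t := by linarith
    have h1 : -(C * (1 + t)) ≤ f t := hlb t ht
    rw [le_div_iff₀ ht0]
    nlinarith
  set L : ℝ := sInf S with hL
  have hlow : ∀ t : ℝ, 1 ≤ t → L ≤ f t / t := fun t ht => csInf_le hbdd ⟨t, ht, rfl⟩
  rw [tendsto_order]
  constructor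
  · intro a ha
    filter_upwards [eventually_ge_atTop (1:ℝ)] with t ht
    exact lt_of_lt_of_le ha (hlow t ht)
  · intro a ha
    obtain ⟨x, ⟨T, hT1, rfl⟩, hx⟩ : ∃ x ∈ S, x < (L + a)/2 :=
      exists_lt_of_csInf_lt hne (by rw [← hL]; linarith)
    rw [mem_Ici] at hT1
    have hT0 : (0:ℝ) < T := by linarith
    set q : ℝ := f T / T with hq
    set K : ℝ := 2*T*|q| + C*(1+2*T) with hK
    have hK0 : 0 ≤ K := by positivity
    have key : ∀ t : ℝ, 3*T ≤ t → f t ≤ q * t + K := by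
      intro t ht3
      have ht0 : 0 < t := by linarith
      have h3 : (3:ℝ) ≤ t / T := (le_div_iff₀ hT0).2 (by linarith)
      have hfl3 : (3:ℤ) ≤ ⌊t/T⌋ := by exact_mod_cast Int.le_floor.2 (by exact_mod_cast h3)
      set k : ℤ := ⌊t/T⌋ - 1 with hk
      have hk2 : (2:ℤ) ≤ k := by omega
      set n : ℕ := k.toNat with hn
      have hnr : (n:ℝ) = (⌊t/T⌋ : ℝ) - 1 := by
        have h : (k.toNat : ℤ) = k := Int.toNat_of_nonneg (by omega)
        have h2 : ((k.toNat:ℤ) : ℝ) = ((k:ℤ):ℝ) := by exact_mod_cast h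
        push_cast at h2
        rw [hn, h2, hk]
        push_cast
        ring
      set r : ℝ := t - n * T with hr
      have hr1 : T ≤ r := by
        have := Int.floor_le (t/T)
        have h4 : (n:ℝ) * T ≤ t - T := by
          rw [hnr]
          have : ((⌊t/T⌋:ℝ) - 1) * T ≤ (t/T - 1) * T := by
            apply mul_le_mul_of_nonneg_right _ hT0.le
            linarith
          calc ((⌊t/T⌋:ℝ) - 1) * T ≤ (t/T - 1) * T := this
          _ = t - T := by field_simp
        linarith [h4]
      have hr2 : r < 2*T := by
        have := Int.lt_floor_add_one (t/T)
        have h4 : t - 2*T < (n:ℝ) * T := by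
          rw [hnr]
          have h5 : t/T - 2 < (⌊t/T⌋:ℝ) - 1 := by linarith
          have : (t/T - 2) * T < ((⌊t/T⌋:ℝ) - 1) * T := by
            apply mul_lt_mul_of_pos_right h5 hT0
          calc t - 2*T = (t/T - 2) * T := by field_simp
          _ < ((⌊t/T⌋:ℝ) - 1) * T := this
        simp only [hr]; linarith
      have hr0 : 0 < r := lt_of_lt_of_le hT0 hr1
      have heq : t = (n:ℝ) * T + r := by rw [hr]; ring
      have h5 : f t ≤ (n:ℝ) * f T + f r := by
        rw [heq]; exact fekete_aux f T hT0 hsub n r hr0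
      have h6 : f r ≤ C * (1 + 2*T) := le_trans (hub r hr0) (by nlinarith)
      have hfT : f T = q * T := by rw [hq]; field_simp
      have hA1 : (n:ℝ) * T ≤ t := by rw [heq]; linarith
      have hA2 : t - 2*T ≤ (n:ℝ) * T := by rw [heq]; linarith
      have h7 : (n:ℝ) * f T ≤ q * t + 2*T*|q| := by
        rw [hfT]
        have hq1 : q ≤ |q| := le_abs_self q
        have hq2 : -|q| ≤ q := neg_abs_le q
        nlinarith [abs_nonneg q]
      rw [hK]; linarith
    filter_upwards [eventually_ge_atTop (3*T), eventually_ge_atTop (2*K/(a-L) + 1),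
      eventually_gt_atTop (0:ℝ)] with t ht3 htK ht0
    have hqa : q < (L + a)/2 := hx
    have hd : 0 < a - L := by linarith
    have h8 : 2*K/(a-L)*(a-L) = 2*K := by field_simp
    have h9 : f t ≤ q * t + K := key t ht3
    rw [div_lt_iff₀ ht0]
    have hq' : (a - L)/2 < a - q := by linarith
    have h11 : ((a-L)/2) * t < (a - q) * t := mul_lt_mul_of_pos_right hq' ht0
    have h12 : K ≤ ((a-L)/2) * t := by nlinarith
    nlinarith

private lemma sSup_div_image {g : ℝ → ℝ} {S : Set ℝ} (hne : (g '' S).Nonempty)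
    (hbdd : BddAbove (g '' S)) {t : ℝ} (ht : 0 < t) :
    sSup ((fun s => g s / t) '' S) = sSup (g '' S) / t := by
  have hmono : Monotone (fun x : ℝ => x / t) := fun x y h => by dsimp only; gcongr
  have h := Monotone.map_csSup_of_continuousAt (f := fun x : ℝ => x / t)
      ((continuous_id.div_const t).continuousAt) hmono hne hbdd
  rw [image_image] at h
  exact h.symm

private lemma iSup_div {g : ℝ → ℝ} (hbdd : BddAbove (range g)) {t : ℝ} (ht : 0 < t) :
    (⨆ s, g s / t) = (⨆ s, g s) / t := by
  have hmono : Monotone (fun x : ℝ => x / t) := fun x y h => by dsimp only; gcongr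
  exact (Monotone.map_ciSup_of_continuousAt (f := fun x : ℝ => x / t)
      ((continuous_id.div_const t).continuousAt) hmono hbdd).symm

set_option maxHeartbeats 2000000 in
/-- For measurable `G : ℝ → ℝ` with sublinear increments, the greatest global
growth-rate over `ℝ` equals the maximum of the greatest global growth-rates over
`(-∞,0)` and `(0,∞)`. -/
theorem greatest_global_growth_rate_max
    (G : ℝ → ℝ) (hG : Measurable G) (C : ℝ) (hC : 0 < C)
    (hlin : ∀ t₁ t₂ : ℝ, |G t₁ - G t₂| ≤ C * (1 + |t₁ - t₂|)) :
    ∃ L Lm Lp : ℝ,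
      Tendsto (fun t : ℝ => ⨆ s : ℝ, (G (s + t) - G s) / t) atTop (nhds L) ∧
      Tendsto (fun t : ℝ =>
          sSup ((fun s => (G (s + t) - G s) / t) '' {s | s ∈ Iio (0:ℝ) ∧ s + t ∈ Iio (0:ℝ)}))
        atTop (nhds Lm) ∧
      Tendsto (fun t : ℝ =>
          sSup ((fun s => (G (s + t) - G s) / t) '' {s | s ∈ Ioi (0:ℝ) ∧ s + t ∈ Ioi (0:ℝ)}))
        atTop (nhds Lp) ∧
      L = max Lm Lp := by
  -- basic increment bounds
  have hAbd : ∀ t s : ℝ, G (s + t) - G s ≤ C * (1 + |t|) := by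
    intro t s
    have h := hlin (s + t) s
    have h2 : s + t - s = t := by ring
    rw [h2] at h
    exact le_trans (le_abs_self _) h
  have hAlb : ∀ t s : ℝ, -(C * (1 + |t|)) ≤ G (s + t) - G s := by
    intro t s
    have h := hlin (s + t) s
    have h2 : s + t - s = t := by ring
    rw [h2] at h
    exact neg_le_of_abs_le h
  set Sp : ℝ → Set ℝ := fun t => {s | s ∈ Ioi (0:ℝ) ∧ s + t ∈ Ioi (0:ℝ)} with hSp
  set Sm : ℝ → Set ℝ := fun t => {s | s ∈ Iio (0:ℝ) ∧ s + t ∈ Iio (0:ℝ)} with hSm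
  set fS : ℝ → ℝ := fun t => ⨆ s, (G (s + t) - G s) with hfS
  set fp : ℝ → ℝ := fun t => sSup ((fun s => G (s + t) - G s) '' Sp t) with hfp
  set fm : ℝ → ℝ := fun t => sSup ((fun s => G (s + t) - G s) '' Sm t) with hfm
  have hbddS : ∀ t : ℝ, BddAbove (range (fun s => G (s + t) - G s)) := by
    intro t; exact ⟨C * (1 + |t|), by rintro x ⟨s, rfl⟩; exact hAbd t s⟩
  have hbddp : ∀ t : ℝ, BddAbove ((fun s => G (s + t) - G s) '' Sp t) := by
    intro t; exact ⟨C * (1 + |t|), by rintro x ⟨s, _, rfl⟩; exact hAbd t s⟩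
  have hbddm : ∀ t : ℝ, BddAbove ((fun s => G (s + t) - G s) '' Sm t) := by
    intro t; exact ⟨C * (1 + |t|), by rintro x ⟨s, _, rfl⟩; exact hAbd t s⟩
  have hnep : ∀ t : ℝ, 0 < t → ((fun s => G (s + t) - G s) '' Sp t).Nonempty := by
    intro t ht
    exact ⟨_, ⟨1, ⟨mem_Ioi.2 one_pos, mem_Ioi.2 (by linarith)⟩, rfl⟩⟩
  have hnem : ∀ t : ℝ, 0 < t → ((fun s => G (s + t) - G s) '' Sm t).Nonempty := by
    intro t ht
    exact ⟨_, ⟨-t - 1, ⟨mem_Iio.2 (by linarith), mem_Iio.2 (by linarith)⟩, rfl⟩⟩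
  -- subadditivity
  have subS : ∀ a b : ℝ, 0 < a → 0 < b → fS (a + b) ≤ fS a + fS b := by
    intro a b ha hb
    apply ciSup_le
    intro s
    have e : s + (a + b) = (s + a) + b := by ring
    have h1 : G ((s + a) + b) - G (s + a) ≤ fS b := le_ciSup (hbddS b) (s + a)
    have h2 : G (s + a) - G s ≤ fS a := le_ciSup (hbddS a) s
    calc G (s + (a + b)) - G s
        = (G ((s + a) + b) - G (s + a)) + (G (s + a) - G s) := by rw [e]; ring
      _ ≤ fS b + fS a := add_le_add h1 h2
      _ = fS a + fS b := by ring
  have subp : ∀ a b : ℝ, 0 < a → 0 < b → fp (a + b) ≤ fp a + fp b := by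
    intro a b ha hb
    apply csSup_le (hnep _ (by linarith))
    rintro x ⟨s, ⟨hs, hst⟩, rfl⟩
    rw [mem_Ioi] at hs hst
    have e : s + (a + b) = (s + a) + b := by ring
    have h1 : G ((s + a) + b) - G (s + a) ≤ fp b :=
      le_csSup (hbddp b) ⟨s + a, ⟨mem_Ioi.2 (by linarith), mem_Ioi.2 (by linarith)⟩, rfl⟩
    have h2 : G (s + a) - G s ≤ fp a :=
      le_csSup (hbddp a) ⟨s, ⟨mem_Ioi.2 hs, mem_Ioi.2 (by linarith)⟩, rfl⟩
    calc G (s + (a + b)) - G s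
        = (G ((s + a) + b) - G (s + a)) + (G (s + a) - G s) := by rw [e]; ring
      _ ≤ fp b + fp a := add_le_add h1 h2
      _ = fp a + fp b := by ring
  have subm : ∀ a b : ℝ, 0 < a → 0 < b → fm (a + b) ≤ fm a + fm b := by
    intro a b ha hb
    apply csSup_le (hnem _ (by linarith))
    rintro x ⟨s, ⟨hs, hst⟩, rfl⟩
    rw [mem_Iio] at hs hst
    have e : s + (a + b) = (s + a) + b := by ring
    have h1 : G ((s + a) + b) - G (s + a) ≤ fm b :=
      le_csSup (hbddm b) ⟨s + a, ⟨mem_Iio.2 (by linarith), mem_Iio.2 (by linarith)⟩, rfl⟩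
    have h2 : G (s + a) - G s ≤ fm a :=
      le_csSup (hbddm a) ⟨s, ⟨mem_Iio.2 hs, mem_Iio.2 (by linarith)⟩, rfl⟩
    calc G (s + (a + b)) - G s
        = (G ((s + a) + b) - G (s + a)) + (G (s + a) - G s) := by rw [e]; ring
      _ ≤ fm b + fm a := add_le_add h1 h2
      _ = fm a + fm b := by ring
  -- upper bounds
  have habs : ∀ t : ℝ, 0 < t → |t| = t := fun t ht => abs_of_pos ht
  have ubS : ∀ t : ℝ, 0 < t → fS t ≤ C * (1 + t) := by
    intro t ht
    exact ciSup_le fun s => (hAbd t s).trans (le_of_eq (by rw [habs t ht]))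
  have ubp : ∀ t : ℝ, 0 < t → fp t ≤ C * (1 + t) := by
    intro t ht
    exact csSup_le (hnep t ht) (by rintro x ⟨s, _, rfl⟩; exact (hAbd t s).trans (le_of_eq (by rw [habs t ht])))
  have ubm : ∀ t : ℝ, 0 < t → fm t ≤ C * (1 + t) := by
    intro t ht
    exact csSup_le (hnem t ht) (by rintro x ⟨s, _, rfl⟩; exact (hAbd t s).trans (le_of_eq (by rw [habs t ht])))
  -- lower bounds
  have lbS : ∀ t : ℝ, 1 ≤ t → -(C * (1 + t)) ≤ fS t := by
    intro t ht
    have h := le_trans (le_of_eq (show -(C*(1+t)) = -(C*(1+|t|)) by rw [habs t (by linarith)])) (hAlb t 0)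
    exact le_trans h (le_ciSup (hbddS t) 0)
  have lbp : ∀ t : ℝ, 1 ≤ t → -(C * (1 + t)) ≤ fp t := by
    intro t ht
    have h := le_trans (le_of_eq (show -(C*(1+t)) = -(C*(1+|t|)) by rw [habs t (by linarith)])) (hAlb t 1)
    exact le_trans h (le_csSup (hbddp t)
      ⟨1, ⟨mem_Ioi.2 one_pos, mem_Ioi.2 (by linarith)⟩, rfl⟩)
  have lbm : ∀ t : ℝ, 1 ≤ t → -(C * (1 + t)) ≤ fm t := by
    intro t ht
    have h := le_trans (le_of_eq (show -(C*(1+t)) = -(C*(1+|t|)) by rw [habs t (by linarith)])) (hAlb t (-t - 1))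
    exact le_trans h (le_csSup (hbddm t)
      ⟨-t - 1, ⟨mem_Iio.2 (by linarith), mem_Iio.2 (by linarith)⟩, rfl⟩)
  -- Fekete limits
  have TS := fekete fS C hC subS ubS lbS
  have Tp := fekete fp C hC subp ubp lbp
  have Tm := fekete fm C hC subm ubm lbm
  set LS : ℝ := sInf ((fun t => fS t / t) '' Ici 1) with hLS
  set Lp : ℝ := sInf ((fun t => fp t / t) '' Ici 1) with hLp
  set Lm : ℝ := sInf ((fun t => fm t / t) '' Ici 1) with hLm
  refine ⟨LS, Lm, Lp, ?_, ?_, ?_, ?_⟩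
  · refine Tendsto.congr' ?_ TS
    filter_upwards [eventually_gt_atTop (0:ℝ)] with t ht
    exact (iSup_div (hbddS t) ht).symm
  · refine Tendsto.congr' ?_ Tm
    filter_upwards [eventually_gt_atTop (0:ℝ)] with t ht
    exact (sSup_div_image (hnem t ht) (hbddm t) ht).symm
  · refine Tendsto.congr' ?_ Tp
    filter_upwards [eventually_gt_atTop (0:ℝ)] with t ht
    exact (sSup_div_image (hnep t ht) (hbddp t) ht).symm
  · -- LS = max Lm Lp
    have hdiv : ∀ {x y u : ℝ}, 0 < u → x ≤ y → x / u ≤ y / u := by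
      intro x y u hu h; gcongr
    have hpS : Lp ≤ LS := by
      refine le_of_tendsto_of_tendsto Tp TS ?_
      filter_upwards [eventually_gt_atTop (0:ℝ)] with t ht
      have h : fp t ≤ fS t := csSup_le (hnep t ht)
        (by rintro x ⟨s, _, rfl⟩; exact le_ciSup (hbddS t) s)
      exact hdiv ht h
    have hmS : Lm ≤ LS := by
      refine le_of_tendsto_of_tendsto Tm TS ?_
      filter_upwards [eventually_gt_atTop (0:ℝ)] with t ht
      have h : fm t ≤ fS t := csSup_le (hnem t ht)
        (by rintro x ⟨s, _, rfl⟩; exact le_ciSup (hbddS t) s)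
      exact hdiv ht h
    have hSmax : LS ≤ max Lm Lp := by
      refine le_of_forall_pos_le_add ?_
      intro ε hε
      set M : ℝ := max Lm Lp + ε with hM
      have hLpM : Lp + ε ≤ M := add_le_add_left (le_max_right _ _) ε
      have hLmM : Lm + ε ≤ M := add_le_add_left (le_max_left _ _) ε
      have ep : ∀ᶠ t : ℝ in atTop, fp t / t < Lp + ε :=
        Tp.eventually_lt_const (by linarith)
      have em : ∀ᶠ t : ℝ in atTop, fm t / t < Lm + ε :=
        Tm.eventually_lt_const (by linarith)
      obtain ⟨t₁, ht₁⟩ := eventually_atTop.1 (ep.and em)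
      set t₀ : ℝ := max t₁ 1 with ht₀def
      have ht₀1 : (1:ℝ) ≤ t₀ := le_max_right _ _
      have ht₀pos : (0:ℝ) < t₀ := by linarith
      have hfpM : ∀ v : ℝ, t₀ ≤ v → fp v ≤ M * v := by
        intro v hv
        have hv0 : 0 < v := lt_of_lt_of_le ht₀pos hv
        have h := (ht₁ v (le_trans (le_max_left _ _) hv)).1
        rw [div_lt_iff₀ hv0] at h
        nlinarith [mul_le_mul_of_nonneg_right hLpM hv0.le]
      have hfmM : ∀ v : ℝ, t₀ ≤ v → fm v ≤ M * v := by
        intro v hv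
        have hv0 : 0 < v := lt_of_lt_of_le ht₀pos hv
        have h := (ht₁ v (le_trans (le_max_left _ _) hv)).2
        rw [div_lt_iff₀ hv0] at h
        nlinarith [mul_le_mul_of_nonneg_right hLmM hv0.le]
      set K : ℝ := 8*C + C*(1 + t₀) + |M| * t₀ with hKdef
      have hnn2 : 0 ≤ |M| * t₀ := mul_nonneg (abs_nonneg M) (by linarith)
      have hnn1 : 0 ≤ C * (1 + t₀) := by nlinarith
      have hax : (0:ℝ) ≤ |M| + M := by linarith [neg_abs_le M]
      have h2C : ∀ x y : ℝ, |x - y| ≤ 1 → |G x - G y| ≤ 2*C := by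
        intro x y hxy
        have h := hlin x y
        have h2 : C * (1 + |x - y|) ≤ 2*C := by nlinarith [abs_nonneg (x - y)]
        linarith
      have hshift : ∀ x y d : ℝ, |d| ≤ 1 → G x - G y ≤ (G (x+d) - G (y+d)) + 4*C := by
        intro x y d hd
        have h1 : |G x - G (x+d)| ≤ 2*C := h2C _ _
          (by rw [show x - (x+d) = -d by ring, abs_neg]; exact hd)
        have h2 : |G (y+d) - G y| ≤ 2*C := h2C _ _
          (by rw [show y + d - y = d by ring]; exact hd)
        linarith [le_trans (le_abs_self _) h1, le_trans (le_abs_self _) h2]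
      have key : ∀ t : ℝ, 2*t₀ ≤ t → ∀ s : ℝ, G (s + t) - G s ≤ M * t + K := by
        intro t ht2 s
        have ht0' : t₀ ≤ t := by linarith
        have htpos : 0 < t := lt_of_lt_of_le ht₀pos ht0'
        by_cases hs0 : 0 ≤ s
        · have h1 : G (s+t) - G s ≤ (G (s+t+1) - G (s+1)) + 4*C := hshift _ _ 1 (by norm_num)
          have e : s + t + 1 = (s+1) + t := by ring
          rw [e] at h1
          have h2 : G ((s+1)+t) - G (s+1) ≤ fp t :=
            le_csSup (hbddp t) ⟨s+1, ⟨mem_Ioi.2 (by linarith), mem_Ioi.2 (by linarith)⟩, rfl⟩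
          have h3 : fp t ≤ M * t := hfpM t ht0'
          linarith [hKdef]
        · by_cases hst0 : s + t ≤ 0
          · have h1 : G (s+t) - G s ≤ (G (s+t+(-1)) - G (s+(-1))) + 4*C :=
              hshift _ _ (-1) (by norm_num)
            have e : s + t + (-1) = (s+(-1)) + t := by ring
            rw [e] at h1
            have h2 : G ((s+(-1))+t) - G (s+(-1)) ≤ fm t :=
              le_csSup (hbddm t) ⟨s+(-1), ⟨mem_Iio.2 (by linarith), mem_Iio.2 (by linarith)⟩, rfl⟩
            have h3 : fm t ≤ M * t := hfmM t ht0'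
            linarith [hKdef]
          · push_neg at hs0 hst0
            have hA : G (s+t) - G 0 ≤ fp (s+t) + 4*C := by
              have h1 : G (s+t) - G 0 ≤ (G (s+t+1) - G (0+1)) + 4*C := hshift _ _ 1 (by norm_num)
              have e : s + t + 1 = 1 + (s+t) := by ring
              have e2 : (0:ℝ) + 1 = 1 := by norm_num
              rw [e, e2] at h1
              have h2 : G (1 + (s+t)) - G 1 ≤ fp (s+t) :=
                le_csSup (hbddp (s+t)) ⟨1, ⟨mem_Ioi.2 one_pos, mem_Ioi.2 (by linarith)⟩, rfl⟩
              linarith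
            have hB : G 0 - G s ≤ fm (-s) + 4*C := by
              have h1 : G 0 - G s ≤ (G (0+(-1)) - G (s+(-1))) + 4*C :=
                hshift _ _ (-1) (by norm_num)
              have e : (0:ℝ) + (-1) = (s+(-1)) + (-s) := by ring
              rw [e] at h1
              have h2 : G ((s+(-1)) + (-s)) - G (s+(-1)) ≤ fm (-s) :=
                le_csSup (hbddm (-s)) ⟨s+(-1), ⟨mem_Iio.2 (by linarith), mem_Iio.2 (by linarith)⟩, rfl⟩
              linarith
            have hsum : G (s+t) - G s ≤ fp (s+t) + fm (-s) + 8*C := by linarith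
            by_cases hvge : t₀ ≤ s + t
            · by_cases huge : t₀ ≤ -s
              · have h5 := hfpM (s+t) hvge
                have h6 := hfmM (-s) huge
                have hMt : M*(s+t) + M*(-s) = M*t := by ring
                linarith [hKdef]
              · push_neg at huge
                have hu0 : 0 < -s := by linarith
                have hfmub : fm (-s) ≤ C*(1+t₀) := le_trans (ubm (-s) hu0) (by nlinarith)
                have h5 : fp (s+t) ≤ M*(s+t) := hfpM (s+t) hvge
                have h6 : M*(s+t) ≤ M * t + |M| * t₀ := by
                  nlinarith [mul_nonneg hax hu0.le,
                    mul_le_mul_of_nonneg_left huge.le (abs_nonneg M)]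
                linarith [hKdef]
            · push_neg at hvge
              have hv0 : 0 < s + t := hst0
              have huge2 : t₀ ≤ -s := by linarith
              have hfpub : fp (s+t) ≤ C*(1+t₀) := le_trans (ubp _ hv0) (by nlinarith)
              have h5 : fm (-s) ≤ M*(-s) := hfmM (-s) huge2
              have h6 : M*(-s) ≤ M * t + |M| * t₀ := by
                nlinarith [mul_nonneg hax hv0.le,
                  mul_le_mul_of_nonneg_left hvge.le (abs_nonneg M)]
              linarith [hKdef]
      have hub2 : ∀ᶠ t : ℝ in atTop, fS t / t ≤ M + K / t := by
        filter_upwards [eventually_ge_atTop (2*t₀), eventually_gt_atTop (0:ℝ)] with t h2 h0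
        have h3 : fS t ≤ M * t + K := ciSup_le (key t h2)
        calc fS t / t ≤ (M * t + K) / t := hdiv h0 h3
          _ = M + K / t := by field_simp
      have hMK : Tendsto (fun t : ℝ => M + K / t) atTop (nhds M) := by
        have h := Filter.Tendsto.div_atTop (tendsto_const_nhds (x := K)) tendsto_id
        simpa using (tendsto_const_nhds (x := M)).add h
      exact le_of_tendsto_of_tendsto TS hMK hub2
    exact le_antisymm hSmax (max_le hmS hpS)
end

section
/- Let G : ℝ → ℝ be measurable with |G(t₁) - G(t₂)| ≤ C(1 + |t₁ - t₂|). Then the greatest global growth-rate of G over ℝ satisfies ⌈G⌉_ℝ = inf { esssup_ℝ A' : A - G ∈ L^∞(ℝ), A' ∈ L^∞(ℝ) }. -/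
open Filter MeasureTheory intervalIntegral

noncomputable def gg (G : ℝ → ℝ) (t : ℝ) : ℝ := ⨆ s : ℝ, (G (s + t) - G s)

noncomputable def LL (G : ℝ → ℝ) : ℝ := sInf ((fun t => gg G t / t) '' Set.Ioi (0:ℝ))

section basic
variable {G : ℝ → ℝ} {C : ℝ}

lemma gg_bdd (hlin : ∀ t₁ t₂ : ℝ, |G t₁ - G t₂| ≤ C * (1 + |t₁ - t₂|)) (t : ℝ) :
    BddAbove (Set.range fun s => G (s + t) - G s) := by
  refine ⟨C * (1 + |t|), ?_⟩
  rintro x ⟨s, rfl⟩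
  have := hlin (s + t) s
  have h2 : s + t - s = t := by ring
  rw [h2] at this
  exact (le_abs_self _).trans this

lemma le_gg (hlin : ∀ t₁ t₂ : ℝ, |G t₁ - G t₂| ≤ C * (1 + |t₁ - t₂|)) (t s : ℝ) :
    G (s + t) - G s ≤ gg G t :=
  le_ciSup (gg_bdd hlin t) s

lemma gg_le (hlin : ∀ t₁ t₂ : ℝ, |G t₁ - G t₂| ≤ C * (1 + |t₁ - t₂|)) (t : ℝ) :
    gg G t ≤ C * (1 + |t|) := by
  refine ciSup_le fun s => ?_
  have := hlin (s + t) s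
  have h2 : s + t - s = t := by ring
  rw [h2] at this
  exact (le_abs_self _).trans this

lemma gg_zero (G : ℝ → ℝ) : gg G 0 = 0 := by
  have : ∀ s : ℝ, G (s + 0) - G s = 0 := fun s => by rw [add_zero]; ring
  simp only [gg, this, ciSup_const]

lemma gg_add (hlin : ∀ t₁ t₂ : ℝ, |G t₁ - G t₂| ≤ C * (1 + |t₁ - t₂|)) (a b : ℝ) :
    gg G (a + b) ≤ gg G a + gg G b := by
  refine ciSup_le fun s => ?_
  have h1 : G (s + (a + b)) - G s
      = (G ((s + a) + b) - G (s + a)) + (G (s + a) - G s) := by ring_nf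
  rw [h1, add_comm (gg G a)]
  exact add_le_add (le_gg hlin b (s + a)) (le_gg hlin a s)

lemma gg_nsmul (hlin : ∀ t₁ t₂ : ℝ, |G t₁ - G t₂| ≤ C * (1 + |t₁ - t₂|)) (t : ℝ) :
    ∀ n : ℕ, ∀ r : ℝ, gg G (n * t + r) ≤ n * gg G t + gg G r := by
  intro n
  induction n with
  | zero => intro r; simp
  | succ n ih =>
    intro r
    have h1 : ((n : ℝ) + 1) * t + r = t + ((n : ℝ) * t + r) := by ring
    push_cast
    rw [h1]
    calc gg G (t + ((n:ℝ) * t + r)) ≤ gg G t + gg G ((n:ℝ) * t + r) := gg_add hlin _ _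
      _ ≤ gg G t + ((n:ℝ) * gg G t + gg G r) := by linarith [ih r]
      _ = ((n:ℝ) + 1) * gg G t + gg G r := by ring

lemma gg_div_ge (hC : 0 < C) (hlin : ∀ t₁ t₂ : ℝ, |G t₁ - G t₂| ≤ C * (1 + |t₁ - t₂|))
    {t : ℝ} (ht : 0 < t) : -C ≤ gg G t / t := by
  have h : ∀ n : ℕ, 0 < n → -C / (n * t) - C ≤ gg G t / t := by
    intro n hn
    have hnt : 0 < (n : ℝ) * t := by positivity
    have h1 : -(C * (1 + n * t)) ≤ gg G ((n : ℝ) * t) := by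
      have := le_gg hlin ((n : ℝ) * t) 0
      have h2 := hlin (0 + (n:ℝ)*t) 0
      have h3 : (0 + (n:ℝ)*t - 0) = (n:ℝ)*t := by ring
      rw [h3] at h2
      have h4 : |(n:ℝ)*t| = (n:ℝ)*t := abs_of_pos hnt
      rw [h4] at h2
      have := neg_abs_le (G (0 + (n:ℝ)*t) - G 0)
      linarith [this.trans (le_gg hlin ((n:ℝ)*t) 0), abs_le.mp h2]
    have h5 : gg G ((n:ℝ) * t) ≤ n * gg G t := by
      have := gg_nsmul hlin t n 0
      rw [add_zero, gg_zero, add_zero] at this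
      exact this
    have h6 : -(C * (1 + n*t)) ≤ (n:ℝ) * gg G t := h1.trans h5
    have hn' : (0:ℝ) < n := by exact_mod_cast hn
    rw [le_div_iff₀ ht]
    have heq : (-C / ((n:ℝ)*t) - C) * t = (-(C * (1 + (n:ℝ)*t))) / n := by
      field_simp
      ring
    rw [heq, div_le_iff₀ hn']
    linarith [h6]
  have hlim : Tendsto (fun n : ℕ => -C / (n * t) - C) atTop (nhds (-C)) := by
    have : Tendsto (fun n : ℕ => ((n : ℝ) * t)) atTop atTop :=
      Tendsto.atTop_mul_const ht tendsto_natCast_atTop_atTop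
    have h2 := Tendsto.div_atTop (tendsto_const_nhds (x := -C)) this
    simpa using h2.sub_const C
  exact le_of_tendsto hlim (eventually_atTop.mpr ⟨1, fun n hn => h n hn⟩)


lemma LL_bddBelow (hC : 0 < C) (hlin : ∀ t₁ t₂ : ℝ, |G t₁ - G t₂| ≤ C * (1 + |t₁ - t₂|)) :
    BddBelow ((fun t => gg G t / t) '' Set.Ioi (0:ℝ)) := by
  refine ⟨-C, ?_⟩
  rintro x ⟨t, ht, rfl⟩
  exact gg_div_ge hC hlin ht

lemma LL_le (hC : 0 < C) (hlin : ∀ t₁ t₂ : ℝ, |G t₁ - G t₂| ≤ C * (1 + |t₁ - t₂|))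
    {t : ℝ} (ht : 0 < t) : LL G ≤ gg G t / t :=
  csInf_le (LL_bddBelow hC hlin) ⟨t, ht, rfl⟩

lemma key (hC : 0 < C) (hlin : ∀ t₁ t₂ : ℝ, |G t₁ - G t₂| ≤ C * (1 + |t₁ - t₂|))
    {ε : ℝ} (hε : 0 < ε) :
    ∃ c : ℝ, 0 < c ∧ ∀ t : ℝ, 0 ≤ t → gg G t ≤ (LL G + ε) * t + c := by
  have hne : ((fun t => gg G t / t) '' Set.Ioi (0:ℝ)).Nonempty :=
    ⟨gg G 1 / 1, ⟨1, by norm_num, rfl⟩⟩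
  obtain ⟨x, hx, hxlt⟩ := exists_lt_of_csInf_lt hne (show LL G < LL G + ε by linarith)
  obtain ⟨t₀, ht₀, rfl⟩ := hx
  simp only [Set.mem_Ioi] at ht₀
  have hgt₀ : gg G t₀ ≤ (LL G + ε) * t₀ := by
    rw [div_lt_iff₀ ht₀] at hxlt
    linarith
  refine ⟨C * (1 + t₀) + |LL G + ε| * t₀ + 1, by positivity, fun t htnn => ?_⟩
  set n : ℕ := ⌊t / t₀⌋₊ with hn
  have hfl := Nat.floor_le (a := t / t₀) (by positivity)
  have hfl2 := Nat.lt_floor_add_one (t / t₀)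
  have hr1 : (n : ℝ) * t₀ ≤ t := by
    rw [← le_div_iff₀ ht₀]; exact hfl
  have hr2 : t - (n : ℝ) * t₀ < t₀ := by
    have : t / t₀ < (n : ℝ) + 1 := hfl2
    rw [div_lt_iff₀ ht₀] at this
    linarith
  have hsplit : gg G t ≤ (n : ℝ) * gg G t₀ + gg G (t - (n : ℝ) * t₀) := by
    have := gg_nsmul hlin t₀ n (t - (n : ℝ) * t₀)
    have he : (n : ℝ) * t₀ + (t - (n : ℝ) * t₀) = t := by ring
    rwa [he] at this
  have hgr : gg G (t - (n : ℝ) * t₀) ≤ C * (1 + t₀) := by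
    have := gg_le hlin (t - (n : ℝ) * t₀)
    have habs : |t - (n : ℝ) * t₀| ≤ t₀ := by
      rw [abs_le]; constructor <;> linarith
    nlinarith [this]
  have hn1 : (n : ℝ) * gg G t₀ ≤ (n : ℝ) * ((LL G + ε) * t₀) :=
    mul_le_mul_of_nonneg_left hgt₀ (Nat.cast_nonneg n)
  have hn2 : (LL G + ε) * ((n : ℝ) * t₀) ≤ (LL G + ε) * t + |LL G + ε| * t₀ := by
    have h1 : (LL G + ε) * ((n : ℝ) * t₀ - t) ≤ |LL G + ε| * t₀ := by
      calc (LL G + ε) * ((n : ℝ) * t₀ - t) ≤ |(LL G + ε) * ((n : ℝ) * t₀ - t)| := le_abs_self _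
        _ = |LL G + ε| * |(n : ℝ) * t₀ - t| := abs_mul _ _
        _ ≤ |LL G + ε| * t₀ := by
            refine mul_le_mul_of_nonneg_left ?_ (abs_nonneg _)
            rw [abs_le]; constructor <;> linarith
    linarith
  calc gg G t ≤ (n : ℝ) * gg G t₀ + gg G (t - (n : ℝ) * t₀) := hsplit
    _ ≤ (LL G + ε) * ((n : ℝ) * t₀) + C * (1 + t₀) := by linarith
    _ ≤ (LL G + ε) * t + |LL G + ε| * t₀ + C * (1 + t₀) := by linarith
    _ ≤ (LL G + ε) * t + (C * (1 + t₀) + |LL G + ε| * t₀ + 1) := by linarith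

lemma iSup_div_eq (hlin : ∀ t₁ t₂ : ℝ, |G t₁ - G t₂| ≤ C * (1 + |t₁ - t₂|))
    {t : ℝ} (ht : 0 < t) :
    (⨆ s : ℝ, (G (s + t) - G s) / t) = gg G t / t := by
  have hbdd' : BddAbove (Set.range fun s : ℝ => (G (s + t) - G s) / t) := by
    refine ⟨C * (1 + |t|) / t, ?_⟩
    rintro x ⟨s, rfl⟩
    have h1 : G (s + t) - G s ≤ C * (1 + |t|) := (le_gg hlin t s).trans (gg_le hlin t)
    exact div_le_div_of_nonneg_right h1 ht.le |>.trans (le_refl _)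
  apply le_antisymm
  · refine ciSup_le fun s => ?_
    exact div_le_div_of_nonneg_right (le_gg hlin t s) ht.le
  · rw [div_le_iff₀ ht]
    refine ciSup_le fun s => ?_
    have := le_ciSup hbdd' s
    rw [div_le_iff₀ ht] at this
    exact this

lemma tendstoLL (hC : 0 < C) (hlin : ∀ t₁ t₂ : ℝ, |G t₁ - G t₂| ≤ C * (1 + |t₁ - t₂|)) :
    Tendsto (fun t : ℝ => ⨆ s : ℝ, (G (s + t) - G s) / t) atTop (nhds (LL G)) := by
  rw [Metric.tendsto_atTop]
  intro ε hε
  obtain ⟨c, hc, hkey⟩ := key hC hlin (show (0:ℝ) < ε/2 by linarith)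
  refine ⟨max 1 (4 * c / ε), fun t htT => ?_⟩
  have ht1 : (1:ℝ) ≤ t := le_trans (le_max_left _ _) htT
  have ht : (0:ℝ) < t := by linarith
  have htc : 4 * c / ε ≤ t := le_trans (le_max_right _ _) htT
  rw [iSup_div_eq hlin ht, Real.dist_eq, abs_lt]
  have hlb : LL G ≤ gg G t / t := LL_le hC hlin ht
  have hub : gg G t / t ≤ LL G + ε/2 + c/t := by
    rw [div_le_iff₀ ht]
    have := hkey t (le_of_lt ht)
    have hct : c / t * t = c := div_mul_cancel₀ c (ne_of_gt ht)
    nlinarith [this]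
  have hct2 : c / t ≤ ε / 4 := by
    rw [div_le_iff₀ ht]
    rw [div_le_iff₀ hε] at htc
    nlinarith
  constructor <;> nlinarith


lemma intInt_of_bdd {f : ℝ → ℝ} (hf : Measurable f) (a b M : ℝ)
    (hM : ∀ x ∈ Set.uIoc a b, |f x| ≤ M) : IntervalIntegrable f volume a b := by
  rw [intervalIntegrable_iff]
  refine Measure.integrableOn_of_bounded (M := M) (measure_Ioc_lt_top).ne
    hf.aestronglyMeasurable ?_
  exact (ae_restrict_iff' measurableSet_uIoc).mpr
    (Filter.Eventually.of_forall fun x hx => by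
      simpa [Real.norm_eq_abs] using hM x hx)

lemma lower_bound (hC : 0 < C) (hlin : ∀ t₁ t₂ : ℝ, |G t₁ - G t₂| ≤ C * (1 + |t₁ - t₂|))
    (A A' : ℝ → ℝ) (hderiv : ∀ x : ℝ, HasDerivAt A (A' x) x)
    (M : ℝ) (hM : ∀ x : ℝ, |A' x| ≤ M)
    (M' : ℝ) (hM' : ∀ x : ℝ, |A x - G x| ≤ M') :
    LL G ≤ essSup A' volume := by
  have hmeasA' : Measurable A' := by
    have : A' = deriv A := funext fun x => ((hderiv x).deriv).symm
    rw [this]; exact measurable_deriv A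
  set m := essSup A' volume with hm
  have hbd : IsBoundedUnder (· ≤ ·) (ae volume) A' :=
    ⟨M, Filter.eventually_map.mpr (Filter.Eventually.of_forall fun x => (abs_le.mp (hM x)).2)⟩
  have hae : ∀ᵐ x, A' x ≤ m := ae_le_essSup hbd
  have hint : ∀ a b : ℝ, IntervalIntegrable A' volume a b := fun a b =>
    intInt_of_bdd hmeasA' a b M (fun x _ => hM x)
  have hM'0 : 0 ≤ M' := (abs_nonneg _).trans (hM' 0)
  have hgg : ∀ t : ℝ, 0 < t → gg G t ≤ m * t + 2 * M' := by
    intro t ht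
    refine ciSup_le fun s => ?_
    have hftc : A (s + t) - A s = ∫ x in s..(s + t), A' x :=
      (integral_eq_sub_of_hasDerivAt (fun x _ => hderiv x) (hint s (s + t))).symm
    have hmono : (∫ x in s..(s + t), A' x) ≤ ∫ _x in s..(s + t), m :=
      integral_mono_ae (by linarith) (hint s (s + t)) intervalIntegrable_const hae
    rw [intervalIntegral.integral_const, smul_eq_mul] at hmono
    have h1 : A (s + t) - A s ≤ m * t := by
      rw [hftc]
      calc (∫ x in s..(s + t), A' x) ≤ (s + t - s) * m := hmono
        _ = m * t := by ring
    have h2 := abs_le.mp (hM' (s + t))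
    have h3 := abs_le.mp (hM' s)
    linarith [h1, h2.1, h2.2, h3.1, h3.2]
  refine le_of_forall_pos_le_add fun δ hδ => ?_
  have ht : (0:ℝ) < (2 * M' + 1) / δ := by positivity
  refine (LL_le hC hlin ht).trans ?_
  rw [div_le_iff₀ ht]
  have hgg' := hgg _ ht
  have h4 : 2 * M' ≤ δ * ((2 * M' + 1) / δ) := by
    rw [mul_div_cancel₀ _ (ne_of_gt hδ)]
    linarith
  nlinarith [hgg']

lemma construction {G : ℝ → ℝ} {C : ℝ} (hG : Measurable G) (hC : 0 < C)
    (hlin : ∀ t₁ t₂ : ℝ, |G t₁ - G t₂| ≤ C * (1 + |t₁ - t₂|))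
    (κ c : ℝ) (hc : 0 < c)
    (hGrow : ∀ x y : ℝ, x ≤ y → G y - G x ≤ κ * (y - x) + c) :
    ∃ A A' : ℝ → ℝ, (∀ x : ℝ, HasDerivAt A (A' x) x) ∧
      (∃ M : ℝ, ∀ x : ℝ, |A' x| ≤ M) ∧
      (∃ M : ℝ, ∀ x : ℝ, |A x - G x| ≤ M) ∧ essSup A' volume ≤ κ := by
  set h : ℝ → ℝ := fun x => G x - κ * x with hh_def
  have hh : ∀ x y : ℝ, x ≤ y → h y ≤ h x + c := by
    intro x y hxy
    have := hGrow x y hxy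
    simp only [hh_def]
    nlinarith [this]
  have hbd : ∀ x : ℝ, BddAbove (h '' Set.Ici x) := by
    intro x
    refine ⟨h x + c, ?_⟩
    rintro z ⟨u, hu, rfl⟩
    exact hh x u hu
  have hne : ∀ x : ℝ, (h '' Set.Ici x).Nonempty := fun x => ⟨h x, x, Set.self_mem_Ici, rfl⟩
  set ψ : ℝ → ℝ := fun x => sSup (h '' Set.Ici x) with hψ_def
  have ψ_le : ∀ x : ℝ, ψ x ≤ h x + c := fun x =>
    csSup_le (hne x) (by rintro z ⟨u, hu, rfl⟩; exact hh x u hu)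
  have le_ψ : ∀ x : ℝ, h x ≤ ψ x := fun x => le_csSup (hbd x) ⟨x, Set.self_mem_Ici, rfl⟩
  have ψ_anti : Antitone ψ := by
    intro x y hxy
    exact csSup_le_csSup (hbd x) (hne y) (Set.image_mono (Set.Ici_subset_Ici.mpr hxy))
  set A₀ : ℝ → ℝ := fun x => κ * x + ψ x with hA₀_def
  have hA₀meas : Measurable A₀ := (measurable_const.mul measurable_id).add ψ_anti.measurable
  have hA₀G : ∀ x : ℝ, G x ≤ A₀ x ∧ A₀ x ≤ G x + c := by
    intro x
    have h1 := le_ψ x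
    have h2 := ψ_le x
    constructor <;> simp only [hA₀_def, hh_def] at * <;> linarith
  have slope : ∀ x y : ℝ, x ≤ y → A₀ y - A₀ x ≤ κ * (y - x) := by
    intro x y hxy
    have := ψ_anti hxy
    simp only [hA₀_def]
    nlinarith
  set D : ℝ := 4 * |κ| + 3 * C + c with hD_def
  have hD : 0 < D := by
    have := abs_nonneg κ
    simp only [hD_def]; positivity
  have osc : ∀ x u : ℝ, x ≤ u → u ≤ x + 2 → |A₀ u - A₀ x| ≤ D := by
    intro x u hxu hu2
    have hκ1 : κ * (u - x) ≤ |κ| * 2 := by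
      calc κ * (u - x) ≤ |κ * (u - x)| := le_abs_self _
        _ = |κ| * |u - x| := abs_mul _ _
        _ ≤ |κ| * 2 := by
            refine mul_le_mul_of_nonneg_left ?_ (abs_nonneg _)
            rw [abs_le]; constructor <;> linarith
    have hκ2 : κ * (x - u) ≤ |κ| * 2 := by
      calc κ * (x - u) ≤ |κ * (x - u)| := le_abs_self _
        _ = |κ| * |x - u| := abs_mul _ _
        _ ≤ |κ| * 2 := by
            refine mul_le_mul_of_nonneg_left ?_ (abs_nonneg _)
            rw [abs_le]; constructor <;> linarith
    have hup : A₀ u - A₀ x ≤ D := by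
      have := slope x u hxu
      simp only [hD_def]
      nlinarith [hC.le, abs_nonneg κ, hc.le]
    have hdown : A₀ x - A₀ u ≤ D := by
      -- ψ x - ψ u ≤ h x - h u + c, and h x - h u = G x - G u + κ*(u - x)
      have h1 : ψ x - ψ u ≤ h x - h u + c := by linarith [ψ_le x, le_ψ u]
      have h2 : G x - G u ≤ C * (1 + |x - u|) := (le_abs_self _).trans (hlin x u)
      have h3 : |x - u| ≤ 2 := by rw [abs_le]; constructor <;> linarith
      have h4 : h x - h u = G x - G u + κ * (u - x) := by simp only [hh_def]; ring
      have h5 : A₀ x - A₀ u = κ * (x - u) + (ψ x - ψ u) := by simp only [hA₀_def]; ring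
      simp only [hD_def]
      nlinarith [hC.le]
    rw [abs_le]; constructor <;> linarith
  have hA₀lin : ∀ x : ℝ, |A₀ x| ≤ |G 0| + C * (1 + |x|) + c := by
    intro x
    have h1 := hA₀G x
    have h2 : |G x - G 0| ≤ C * (1 + |x - 0|) := hlin x 0
    rw [sub_zero] at h2
    have h3 := abs_le.mp h2
    have h4 := le_abs_self (G 0)
    have h5 := neg_abs_le (G 0)
    rw [abs_le]; constructor <;> [nlinarith [hc.le]; nlinarith [hc.le]]
  have intA₀ : ∀ a b : ℝ, IntervalIntegrable A₀ volume a b := by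
    intro a b
    refine intInt_of_bdd hA₀meas a b (|G 0| + C * (1 + (|a| + |b|)) + c) fun x hx => ?_
    have hxb : |x| ≤ |a| + |b| := by
      rw [Set.mem_uIoc] at hx
      rw [abs_le]
      rcases hx with ⟨h1, h2⟩ | ⟨h1, h2⟩ <;>
        constructor <;> nlinarith [le_abs_self a, le_abs_self b, neg_abs_le a, neg_abs_le b]
    have := hA₀lin x
    nlinarith [hC.le]
  -- first averaging
  set P : ℝ → ℝ := fun y => ∫ u in (0:ℝ)..y, A₀ u with hP_def
  have contP : Continuous P := intervalIntegral.continuous_primitive intA₀ 0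
  set A₁ : ℝ → ℝ := fun x => ∫ u in x..(x + 1), A₀ u with hA₁_def
  have hA₁P : ∀ x : ℝ, A₁ x = P (x + 1) - P x := by
    intro x
    have := integral_add_adjacent_intervals (intA₀ 0 x) (intA₀ x (x + 1))
    simp only [hA₁_def, hP_def]
    linarith
  have contA₁ : Continuous A₁ := by
    rw [show A₁ = fun x => P (x + 1) - P x from funext hA₁P]
    exact (contP.comp (continuous_id.add continuous_const)).sub contP
  have hA₁osc : ∀ x y : ℝ, x ≤ y → y ≤ x + 1 → |A₁ y - A₀ x| ≤ D := by
    intro x y hxy hy1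
    have hlow : A₀ x - D ≤ A₁ y := by
      have : (∫ _u in y..(y + 1), (A₀ x - D)) ≤ ∫ u in y..(y + 1), A₀ u := by
        refine integral_mono_on (by linarith) intervalIntegrable_const (intA₀ y (y + 1))
          fun u hu => ?_
        have := osc x u (by rcases hu with ⟨h1, h2⟩; linarith)
          (by rcases hu with ⟨h1, h2⟩; linarith)
        linarith [(abs_le.mp this).1]
      simpa using this
    have hhigh : A₁ y ≤ A₀ x + D := by
      have : (∫ u in y..(y + 1), A₀ u) ≤ ∫ _u in y..(y + 1), (A₀ x + D) := by
        refine integral_mono_on (by linarith) (intA₀ y (y + 1)) intervalIntegrable_const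
          fun u hu => ?_
        have := osc x u (by rcases hu with ⟨h1, h2⟩; linarith)
          (by rcases hu with ⟨h1, h2⟩; linarith)
        linarith [(abs_le.mp this).2]
      simpa using this
    rw [abs_le]; constructor <;> simp only [hA₁_def] at * <;> linarith
  -- second averaging
  set Q : ℝ → ℝ := fun y => ∫ u in (0:ℝ)..y, A₁ u with hQ_def
  have hQderiv : ∀ y : ℝ, HasDerivAt Q (A₁ y) y := fun y =>
    (contA₁.integral_hasStrictDerivAt 0 y).hasDerivAt
  set A₂ : ℝ → ℝ := fun x => ∫ y in x..(x + 1), A₁ y with hA₂_def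
  have intA₁ : ∀ a b : ℝ, IntervalIntegrable A₁ volume a b := fun a b =>
    contA₁.intervalIntegrable a b
  have hA₂Q : ∀ x : ℝ, A₂ x = Q (x + 1) - Q x := by
    intro x
    have := integral_add_adjacent_intervals (intA₁ 0 x) (intA₁ x (x + 1))
    simp only [hA₂_def, hQ_def]
    linarith
  set A' : ℝ → ℝ := fun x => A₁ (x + 1) - A₁ x with hA'_def
  have hderiv : ∀ x : ℝ, HasDerivAt A₂ (A' x) x := by
    intro x
    rw [show A₂ = fun x => Q (x + 1) - Q x from funext hA₂Q]
    have h1 : HasDerivAt (fun x : ℝ => Q (x + 1)) (A₁ (x + 1) * 1) x :=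
      HasDerivAt.comp (h₂ := Q) x (hQderiv (x + 1)) ((hasDerivAt_id' x).add_const 1)
    rw [mul_one] at h1
    exact h1.sub (hQderiv x)
  have hA'bdd : ∀ x : ℝ, |A' x| ≤ 2 * D := by
    intro x
    have h1 := hA₁osc x (x + 1) (by linarith) (le_refl _)
    have h2 := hA₁osc x x (le_refl _) (by linarith)
    simp only [hA'_def]
    rw [abs_le] at *
    constructor <;> [linarith [h1.1, h2.2]; linarith [h1.2, h2.1]]
  have hA₂G : ∀ x : ℝ, |A₂ x - G x| ≤ D + c := by
    intro x
    have hlow : A₀ x - D ≤ A₂ x := by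
      have : (∫ _y in x..(x + 1), (A₀ x - D)) ≤ ∫ y in x..(x + 1), A₁ y := by
        refine integral_mono_on (by linarith) intervalIntegrable_const (intA₁ x (x + 1))
          fun y hy => ?_
        have := hA₁osc x y hy.1 hy.2
        linarith [(abs_le.mp this).1]
      simpa [hA₂_def] using this
    have hhigh : A₂ x ≤ A₀ x + D := by
      have : (∫ y in x..(x + 1), A₁ y) ≤ ∫ _y in x..(x + 1), (A₀ x + D) := by
        refine integral_mono_on (by linarith) (intA₁ x (x + 1)) intervalIntegrable_const
          fun y hy => ?_
        have := hA₁osc x y hy.1 hy.2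
        linarith [(abs_le.mp this).2]
      simpa [hA₂_def] using this
    have := hA₀G x
    rw [abs_le]; constructor <;> linarith [this.1, this.2]
  -- derivative bounded above by κ everywhere
  have hA'le : ∀ x : ℝ, A' x ≤ κ := by
    intro x
    have hshift : (∫ u in (x+1)..(x+2), A₀ u) = ∫ u in x..(x+1), A₀ (u + 1) := by
      rw [intervalIntegral.integral_comp_add_right (fun u => A₀ u) 1]
      norm_num [show x + 1 + 1 = x + 2 by ring]
    have hA₁x1 : A₁ (x + 1) = ∫ u in x..(x+1), A₀ (u + 1) := by
      simp only [hA₁_def]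
      rw [← hshift]
      norm_num [show x + 1 + 1 = x + 2 by ring]
    have hint1 : IntervalIntegrable (fun u => A₀ (u + 1)) volume x (x + 1) := by
      have := (intA₀ (x + 1) (x + 2)).comp_add_right 1
      simpa [show x + 1 - 1 = x by ring, show x + 2 - 1 = x + 1 by ring] using this
    have heq : A' x = ∫ u in x..(x+1), (A₀ (u + 1) - A₀ u) := by
      rw [intervalIntegral.integral_sub hint1 (intA₀ x (x + 1))]
      simp only [hA'_def]
      rw [hA₁x1]
    rw [heq]
    have : (∫ u in x..(x+1), (A₀ (u + 1) - A₀ u)) ≤ ∫ _u in x..(x+1), κ := by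
      refine integral_mono_on (by linarith) (hint1.sub (intA₀ x (x + 1)))
        intervalIntegrable_const fun u _ => ?_
      have := slope u (u + 1) (by linarith)
      nlinarith
    simpa using this
  refine ⟨A₂, A', hderiv, ⟨2 * D, hA'bdd⟩, ⟨D + c, hA₂G⟩, ?_⟩
  -- essSup A' ≤ κ
  have hco : IsCoboundedUnder (· ≤ ·) (ae volume) A' := by
    refine IsBoundedUnder.isCoboundedUnder_le ⟨-(2 * D), ?_⟩
    exact Filter.eventually_map.mpr (Filter.Eventually.of_forall fun x =>
      (abs_le.mp (hA'bdd x)).1)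
  exact limsup_le_of_le hco (Filter.Eventually.of_forall hA'le)


/-- For measurable `G : ℝ → ℝ` with sublinear increments, the greatest global
growth-rate over `ℝ` equals
`inf { esssup_ℝ A' : A - G ∈ L^∞(ℝ), A' ∈ L^∞(ℝ) }`. -/
theorem greatest_global_growth_rate_characterization
    (G : ℝ → ℝ) (hG : Measurable G) (C : ℝ) (hC : 0 < C)
    (hlin : ∀ t₁ t₂ : ℝ, |G t₁ - G t₂| ≤ C * (1 + |t₁ - t₂|)) :
    ∃ L : ℝ,
      Tendsto (fun t : ℝ => ⨆ s : ℝ, (G (s + t) - G s) / t) atTop (nhds L) ∧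
      L = sInf {m : ℝ | ∃ A A' : ℝ → ℝ,
          (∀ x : ℝ, HasDerivAt A (A' x) x) ∧
          (∃ M : ℝ, ∀ x : ℝ, |A' x| ≤ M) ∧
          (∃ M : ℝ, ∀ x : ℝ, |A x - G x| ≤ M) ∧
          m = essSup A' volume} := by
  set S := {m : ℝ | ∃ A A' : ℝ → ℝ,
          (∀ x : ℝ, HasDerivAt A (A' x) x) ∧
          (∃ M : ℝ, ∀ x : ℝ, |A' x| ≤ M) ∧
          (∃ M : ℝ, ∀ x : ℝ, |A x - G x| ≤ M) ∧
          m = essSup A' volume} with hS_def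
  have hSlb : ∀ m ∈ S, LL G ≤ m := by
    rintro m ⟨A, A', hd, ⟨M, hM⟩, ⟨M', hM'⟩, rfl⟩
    exact lower_bound hC hlin A A' hd M hM M' hM'
  have hGrow : ∀ ε : ℝ, 0 < ε → ∃ c : ℝ, 0 < c ∧
      ∀ x y : ℝ, x ≤ y → G y - G x ≤ (LL G + ε) * (y - x) + c := by
    intro ε hε
    obtain ⟨c, hc, hkey⟩ := key hC hlin hε
    refine ⟨c, hc, fun x y hxy => ?_⟩
    have h1 : G (x + (y - x)) - G x ≤ gg G (y - x) := le_gg hlin (y - x) x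
    have h2 : x + (y - x) = y := by ring
    rw [h2] at h1
    exact h1.trans (hkey (y - x) (by linarith))
  have hmem : ∀ ε : ℝ, 0 < ε → ∃ m ∈ S, m ≤ LL G + ε := by
    intro ε hε
    obtain ⟨c, hc, hgrow⟩ := hGrow ε hε
    obtain ⟨A, A', hd, hb1, hb2, hess⟩ := construction hG hC hlin (LL G + ε) c hc hgrow
    exact ⟨essSup A' volume, ⟨A, A', hd, hb1, hb2, rfl⟩, hess⟩
  have hSne : S.Nonempty := by
    obtain ⟨m, hm, _⟩ := hmem 1 one_pos
    exact ⟨m, hm⟩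
  refine ⟨LL G, tendstoLL hC hlin, le_antisymm (le_csInf hSne hSlb) ?_⟩
  refine le_of_forall_pos_le_add fun ε hε => ?_
  obtain ⟨m, hm, hmle⟩ := hmem ε hε
  exact (csInf_le ⟨LL G, hSlb⟩ hm).trans hmle

end basic
end
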